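/- Let m ≤ k be positive integers, a_1,…,a_n ∈ ℝ^m, and x ∈ ℝ_{≥0}^n with Σ_{i∈[n]} x_i = k. Then the multinomial expectation identity holds: Σ_{c : [n] → ℕ, Σ_i c_i = k} (k!/∏_{i∈[n]} c_i!) · ∏_{i∈[n]} (x_i/k)^{c_i} · det(Σ_{i∈[n]} c_i a_i a_iᵀ) = (k! / ((k−m)! · k^m)) · det(Σ_{i∈[n]} x_i a_i a_iᵀ). In other words, if a multiset 𝒮 of k indices is sampled i.i.d. with Pr{pick i} = x_i/k, then E[det(Σ_{i∈𝒮} a_i a_iᵀ)] = (k!/((k−m)! k^m)) · det(Σ_{i∈[n]} x_i a_i a_iᵀ). -/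

import Mathlib

open Matrix Finset

/-!
Expanding the determinant multilinearly in its rows gives
`det (∑ i, tᵢ • aᵢ aᵢᵀ) = ∑_{f : [m] ↪ ι} (∏ⱼ t_{f j}) w_f`, the non-injective `f` dropping out
because they repeat a row. Taking `t = c` and averaging over the multinomial distribution, the
identity reduces to the falling-moment formula
`∑_c mult(c) pᶜ ∏_{i ∈ S} cᵢ = k (k - 1) ⋯ (k - |S| + 1) (∏_{i ∈ S} pᵢ) (∑ p)^(k - |S|)`,
which follows by induction on `S` from `(c_s + 1) mult(c + e_s) = (|c| + 1) mult(c)`.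
-/

section Multinomial

variable {ι : Type*} [Fintype ι] [DecidableEq ι]

lemma prod_add_single_apply {M : Type*} [CommMonoid M] (f : ι → ℕ → M) (c : ι → ℕ) (s : ι) :
    ∏ i, f i ((c + Pi.single s 1 : ι → ℕ) i) = f s (c s + 1) * ∏ i ∈ univ.erase s, f i (c i) := by
  rw [← mul_prod_erase univ _ (mem_univ s)]
  congr 1
  · simp
  · exact prod_congr rfl fun i hi => by simp [ne_of_mem_erase hi]

lemma sum_add_single_one (c : ι → ℕ) (s : ι) :
    ∑ i, (c + Pi.single s 1 : ι → ℕ) i = ∑ i, c i + 1 := by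
  simp [sum_add_distrib]

lemma Nat.multinomial_add_single_mul (c : ι → ℕ) (s : ι) :
    multinomial univ (c + Pi.single s 1) * (c s + 1) = (∑ i, c i + 1) * multinomial univ c := by
  have hc := multinomial_spec univ c
  have hcs := multinomial_spec univ (c + Pi.single s 1)
  rw [sum_add_single_one, prod_add_single_apply (fun _ n => n.factorial), factorial_succ,
    factorial_succ, ← hc, ← mul_prod_erase univ _ (mem_univ s)] at hcs
  have hpos : 0 < (c s).factorial * ∏ i ∈ univ.erase s, (c i).factorial :=
    Nat.mul_pos (factorial_pos _) (prod_pos fun i _ => factorial_pos _)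
  apply Nat.eq_of_mul_eq_mul_left hpos
  linear_combination hcs

lemma sum_piAntidiag_succ_eq_sum_add_single {M : Type*} [AddCommMonoid M] (s : ι) (k : ℕ)
    {T : (ι → ℕ) → M} (hT : ∀ c, c s = 0 → T c = 0) :
    ∑ c ∈ piAntidiag univ (k + 1), T c = ∑ c ∈ piAntidiag univ k, T (c + Pi.single s 1) := by
  symm
  refine sum_bij_ne_zero (fun c _ _ => c + Pi.single s 1) (fun c hc _ => ?_)
    (fun _ _ _ _ _ _ h => add_right_cancel h) (fun c hc hTc => ?_) (fun _ _ _ => rfl)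
  · rw [mem_piAntidiag] at hc ⊢
    exact ⟨by rw [sum_add_single_one, hc.1], by simp⟩
  · have hs : c s ≠ 0 := fun h => hTc (hT c h)
    have hle : Pi.single s 1 ≤ c := fun i => by
      rcases eq_or_ne i s with rfl | hi
      · simpa [Nat.one_le_iff_ne_zero] using hs
      · simp [hi]
    refine ⟨c - Pi.single s 1, ?_, by rwa [tsub_add_cancel_of_le hle], tsub_add_cancel_of_le hle⟩
    rw [mem_piAntidiag] at hc ⊢
    refine ⟨?_, by simp⟩
    rw [← add_left_inj 1, ← sum_add_single_one, tsub_add_cancel_of_le hle, hc.1]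

variable {R : Type*} [CommSemiring R]

def multinomialTerm (p : ι → R) (c : ι → ℕ) : R :=
  Nat.multinomial univ c * ∏ i, p i ^ c i

lemma sum_multinomialTerm (p : ι → R) (k : ℕ) :
    ∑ c ∈ piAntidiag univ k, multinomialTerm p c = (∑ i, p i) ^ k :=
  (sum_pow_eq_sum_piAntidiag univ p k).symm

lemma multinomialTerm_add_single_mul (p : ι → R) (c : ι → ℕ) (s : ι) :
    multinomialTerm p (c + Pi.single s 1) * (c s + 1) =
      (∑ i, c i + 1) * p s * multinomialTerm p c := by
  have hmult : (Nat.multinomial univ (c + Pi.single s 1) * (c s + 1) : R) =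
      ((∑ i, c i : ℕ) + 1) * Nat.multinomial univ c := by
    simpa using congrArg (Nat.cast (R := R)) (Nat.multinomial_add_single_mul c s)
  rw [multinomialTerm, multinomialTerm, prod_add_single_apply (fun i n => p i ^ n),
    ← mul_prod_erase univ (fun i => p i ^ c i) (mem_univ s)]
  calc _ = (Nat.multinomial univ (c + Pi.single s 1) * (c s + 1) : R) *
        (p s * p s ^ c s * ∏ i ∈ univ.erase s, p i ^ c i) := by ring
    _ = _ := by rw [hmult]; ring

lemma sum_multinomialTerm_mul_count_mul (p : ι → R) (s : ι) (k : ℕ) (F : (ι → ℕ) → R) :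
    ∑ c ∈ piAntidiag univ (k + 1), multinomialTerm p c * (c s * F c) =
      (k + 1) * p s * ∑ c ∈ piAntidiag univ k, multinomialTerm p c * F (c + Pi.single s 1) := by
  rw [sum_piAntidiag_succ_eq_sum_add_single s k fun c hc => by simp [hc], mul_sum]
  refine sum_congr rfl fun c hc => ?_
  have h := multinomialTerm_add_single_mul p c s
  rw [(mem_piAntidiag.1 hc).1] at h
  simp only [Pi.add_apply, Pi.single_eq_same, Nat.cast_add, Nat.cast_one]
  calc _ = multinomialTerm p (c + Pi.single s 1) * (c s + 1) * F (c + Pi.single s 1) := by ring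
    _ = _ := by rw [h]; ring

theorem sum_multinomialTerm_mul_prod_count (p : ι → R) (S : Finset ι) (k : ℕ) :
    ∑ c ∈ piAntidiag univ k, multinomialTerm p c * ∏ i ∈ S, (c i : R) =
      k.descFactorial #S * (∏ i ∈ S, p i) * (∑ i, p i) ^ (k - #S) := by
  induction S using Finset.induction_on generalizing k with
  | empty => simp [sum_multinomialTerm]
  | @insert s S hs ih =>
    cases k with
    | zero => simp [card_insert_of_notMem hs]
    | succ k =>
      have hF : ∀ c : ι → ℕ,
          ∏ i ∈ S, ((c + Pi.single s 1 : ι → ℕ) i : R) = ∏ i ∈ S, (c i : R) :=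
        fun c => prod_congr rfl fun i hi => by simp [ne_of_mem_of_not_mem hi hs]
      simp only [prod_insert hs, card_insert_of_notMem hs, sum_multinomialTerm_mul_count_mul, hF,
        ih, Nat.succ_descFactorial_succ, Nat.add_sub_add_right]
      push_cast
      ring

end Multinomial

section Determinant

variable {R ι m : Type*} [CommRing R] [Fintype ι] [Fintype m] [DecidableEq m]

lemma det_sum_smul_vecMulVec (a : ι → m → R) (t : ι → R) :
    (∑ i, t i • vecMulVec (a i) (a i)).det =
      ∑ f : m ↪ ι, (∏ j, t (f j)) * ((∏ j, a (f j) j) * (of fun j => a (f j)).det) := by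
  let D := (detRowAlternating : (m → R) [⋀^m]→ₗ[R] R).toMultilinearMap
  have hrows : ∑ i, t i • vecMulVec (a i) (a i) = of fun j => ∑ i, (t i * a i j) • a i := by
    ext j j'
    simp [Matrix.sum_apply, vecMulVec_apply, mul_assoc]
  have hexpand : (∑ i, t i • vecMulVec (a i) (a i)).det =
      ∑ f : m → ι, (∏ j, t (f j)) * ((∏ j, a (f j) j) * (of fun j => a (f j)).det) := by
    rw [hrows]
    refine (D.map_sum fun j i => (t i * a i j) • a i).trans (sum_congr rfl fun f _ => ?_)
    rw [D.map_smul_univ, smul_eq_mul, prod_mul_distrib, mul_assoc]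
    rfl
  rw [hexpand]
  refine (Fintype.sum_of_injective _ DFunLike.coe_injective _ _ (fun f hf => ?_) fun _ => rfl).symm
  obtain ⟨j₁, j₂, hf, hne⟩ := Function.not_injective_iff.1 fun h => hf ⟨⟨f, h⟩, rfl⟩
  rw [det_zero_of_row_eq hne (congrArg a hf), mul_zero, mul_zero]

theorem sum_multinomialTerm_mul_det_sum_smul_vecMulVec [DecidableEq ι] (p : ι → R)
    (a : ι → m → R) (k : ℕ) :
    ∑ c ∈ piAntidiag univ k,
        multinomialTerm p c * (∑ i, (c i : R) • vecMulVec (a i) (a i)).det =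
      k.descFactorial (Fintype.card m) * (∑ i, p i) ^ (k - Fintype.card m) *
        (∑ i, p i • vecMulVec (a i) (a i)).det := by
  simp only [det_sum_smul_vecMulVec, mul_sum]
  rw [sum_comm]
  refine sum_congr rfl fun f _ => ?_
  have h := sum_multinomialTerm_mul_prod_count p (univ.map f) k
  simp only [prod_map, card_map, card_univ] at h
  simp only [← mul_assoc, ← sum_mul, h]
  ring

end Determinant

lemma Nat.cast_multinomial {α K : Type*} [Field K] [CharZero K] (s : Finset α) (f : α → ℕ) :
    (multinomial s f : K) = (∑ i ∈ s, f i).factorial / ∏ i ∈ s, ((f i).factorial : K) := by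
  rw [eq_div_iff (prod_ne_zero_iff.2 fun i _ => cast_ne_zero.2 (factorial_ne_zero _)), mul_comm]
  exact_mod_cast multinomial_spec s f

lemma Nat.cast_descFactorial_eq_div {K : Type*} [Field K] [CharZero K] {n k : ℕ} (h : k ≤ n) :
    (n.descFactorial k : K) = n.factorial / (n - k).factorial := by
  rw [eq_div_iff (cast_ne_zero.2 (factorial_ne_zero _)), mul_comm]
  exact_mod_cast factorial_mul_descFactorial h

theorem stmt10_general (m k n : ℕ) (hmk : m ≤ k)
    (a : Fin n → Fin m → ℝ) (x : Fin n → ℝ)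
    (hxs : ∑ i, x i = (k : ℝ)) :
    ∑ c ∈ Finset.Nat.antidiagonalTuple n k,
        ((k.factorial : ℝ) / ∏ i, ((c i).factorial : ℝ))
          * (∏ i, (x i / (k : ℝ)) ^ (c i))
          * (∑ i, (c i : ℝ) • vecMulVec (a i) (a i)).det
      = ((k.factorial : ℝ) / (((k - m).factorial : ℝ) * (k : ℝ) ^ m))
          * (∑ i, x i • vecMulVec (a i) (a i)).det := by
  have hterm : ∀ c ∈ piAntidiag univ k, (k.factorial : ℝ) / (∏ i, ((c i).factorial : ℝ)) *
      ∏ i, (x i / k) ^ c i = multinomialTerm (fun i => x i / k) c := by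
    intro c hc
    rw [multinomialTerm, Nat.cast_multinomial, (mem_piAntidiag.1 hc).1]
  -- at `k = 0` the base is `0 / 0 = 0`, but then the exponent `k - m` vanishes as well
  have hsum : (∑ i, x i / k) ^ (k - m) = 1 := by
    rcases eq_or_ne k 0 with rfl | hk
    · simp [Nat.le_zero.1 hmk]
    · rw [← sum_div, hxs, div_self (Nat.cast_ne_zero.2 hk), one_pow]
  have hsmul : ∑ i, (x i / k) • vecMulVec (a i) (a i) =
      (k : ℝ)⁻¹ • ∑ i, x i • vecMulVec (a i) (a i) := by
    simp only [smul_sum, smul_smul, div_eq_inv_mul]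
  rw [← piAntidiag_univ_fin_eq_antidiagonalTuple, sum_congr rfl fun c hc => by rw [hterm c hc],
    sum_multinomialTerm_mul_det_sum_smul_vecMulVec, Fintype.card_fin, hsum, hsmul, det_smul,
    Fintype.card_fin, Nat.cast_descFactorial_eq_div hmk]
  ring

/-- Multinomial expectation identity: sampling `k` indices i.i.d. with probabilities
`x_i/k` yields `E[det(∑_{i∈𝒮} a_i a_iᵀ)] = (k!/((k-m)! k^m)) det(∑_i x_i a_i a_iᵀ)`. -/
theorem stmt10 (m k n : ℕ) (hm : 1 ≤ m) (hmk : m ≤ k)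
    (a : Fin n → Fin m → ℝ) (x : Fin n → ℝ)
    (hx : ∀ i, 0 ≤ x i) (hxs : ∑ i, x i = (k : ℝ)) :
    ∑ c ∈ Finset.Nat.antidiagonalTuple n k,
        ((k.factorial : ℝ) / ∏ i, ((c i).factorial : ℝ))
          * (∏ i, (x i / (k : ℝ)) ^ (c i))
          * (∑ i, (c i : ℝ) • vecMulVec (a i) (a i)).det
      = ((k.factorial : ℝ) / (((k - m).factorial : ℝ) * (k : ℝ) ^ m))
          * (∑ i, x i • vecMulVec (a i) (a i)).det :=
  stmt10_general m k n hmk a x hxs
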